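/- arXiv:1311.6186 — 2 statements merged into one kernel-verified Lean document; each statement's English description precedes it below -/
import Mathlib

section
/- Let A be a p₁×p₂ real matrix with first and second singular values l₁ > l₂ ≥ 0, first pair of singular vectors (u, v), and let β ∈ ℝ^{p₂} be a unit vector. Define ᾱ = Aβ and suppose ᾱ ≠ 0. Then sin²∠(ᾱ, u) ≤ (sin²∠(β, v) / cos²∠(β, v)) · (l₂/l₁)². -/
/-!
Split `β = ⟪β, v⟫ v + w` with `w ⊥ v`. Then `Aβ = ⟪β, v⟫ l₁ u + Aw` with `Aw ⊥ u` and
`‖Aw‖ ≤ l₂ ‖w‖`. For a vector `a u + r` with `r ⊥ u` and `‖u‖ = 1`, the squared tangent of its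
angle with `u` is `‖r‖² / a²` and the squared sine is `‖r‖² / (a² + ‖r‖²)`, which is smaller.
Applying this to both splittings gives
`sin²∠(Aβ, u) ≤ ‖Aw‖² / (⟪β, v⟫ l₁)² ≤ (‖w‖² / ⟪β, v⟫²) (l₂ / l₁)² = tan²∠(β, v) (l₂ / l₁)²`.
-/

open Matrix InnerProductGeometry RealInnerProductSpace

namespace InnerProductGeometry

variable {V : Type*} [NormedAddCommGroup V] [InnerProductSpace ℝ V]

lemma cos_sq_angle (x y : V) :
    Real.cos (angle x y) ^ 2 = ⟪x, y⟫ ^ 2 / (‖x‖ ^ 2 * ‖y‖ ^ 2) := by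
  rw [cos_angle, div_pow, mul_pow]

lemma sin_sq_angle (x y : V) :
    Real.sin (angle x y) ^ 2 = 1 - ⟪x, y⟫ ^ 2 / (‖x‖ ^ 2 * ‖y‖ ^ 2) := by
  rw [Real.sin_sq, cos_sq_angle]

lemma cos_sq_angle_smul_add_of_inner_eq_zero {u r : V} (hu : ‖u‖ = 1) (hr : ⟪r, u⟫ = 0)
    (a : ℝ) : Real.cos (angle (a • u + r) u) ^ 2 = a ^ 2 / (a ^ 2 + ‖r‖ ^ 2) := by
  have hinner : ⟪a • u + r, u⟫ = a := by
    rw [inner_add_left, real_inner_smul_left, real_inner_self_eq_norm_sq, hu, hr]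
    ring
  have hnorm : ‖a • u + r‖ ^ 2 = a ^ 2 + ‖r‖ ^ 2 := by
    have horth : ⟪a • u, r⟫ = 0 := by rw [real_inner_smul_left, real_inner_comm, hr, mul_zero]
    rw [norm_add_sq_real, horth, norm_smul, hu, mul_one, Real.norm_eq_abs, sq_abs]
    ring
  rw [cos_sq_angle, hinner, hnorm, hu]
  ring

lemma sin_sq_angle_smul_add_of_inner_eq_zero {u r : V} (hu : ‖u‖ = 1) (hr : ⟪r, u⟫ = 0)
    {a : ℝ} (ha : a ≠ 0) :
    Real.sin (angle (a • u + r) u) ^ 2 = ‖r‖ ^ 2 / (a ^ 2 + ‖r‖ ^ 2) := by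
  have hpos : 0 < a ^ 2 + ‖r‖ ^ 2 := by positivity
  rw [Real.sin_sq, cos_sq_angle_smul_add_of_inner_eq_zero hu hr]
  field_simp
  ring

lemma tan_sq_angle_smul_add_of_inner_eq_zero {u r : V} (hu : ‖u‖ = 1) (hr : ⟪r, u⟫ = 0)
    {a : ℝ} (ha : a ≠ 0) : Real.tan (angle (a • u + r) u) ^ 2 = ‖r‖ ^ 2 / a ^ 2 := by
  have hpos : 0 < a ^ 2 + ‖r‖ ^ 2 := by positivity
  rw [Real.tan_eq_sin_div_cos, div_pow, sin_sq_angle_smul_add_of_inner_eq_zero hu hr ha,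
    cos_sq_angle_smul_add_of_inner_eq_zero hu hr]
  field_simp

theorem sin_sq_angle_apply_le_tan_sq_mul
    {E F : Type*} [NormedAddCommGroup E] [InnerProductSpace ℝ E]
    [NormedAddCommGroup F] [InnerProductSpace ℝ F]
    {T : E →ₗ[ℝ] F} {u : F} {v : E} {l₁ l₂ : ℝ} (hl₁ : l₁ ≠ 0) (hu : ‖u‖ = 1) (hv : ‖v‖ = 1)
    (hTv : T v = l₁ • u)
    (hTperp : ∀ x, ⟪x, v⟫ = 0 → ⟪T x, u⟫ = 0 ∧ ‖T x‖ ^ 2 ≤ l₂ ^ 2 * ‖x‖ ^ 2)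
    {β : E} (hβv : ⟪β, v⟫ ≠ 0) :
    Real.sin (angle (T β) u) ^ 2 ≤ Real.tan (angle β v) ^ 2 * (l₂ / l₁) ^ 2 := by
  set c := ⟪β, v⟫
  set w := β - c • v
  have hβ : β = c • v + w := (add_sub_cancel _ _).symm
  have hwv : ⟪w, v⟫ = 0 := by
    rw [inner_sub_left, real_inner_smul_left, real_inner_self_eq_norm_sq, hv]
    ring
  obtain ⟨hTwu, hTw⟩ := hTperp w hwv
  have hTβ : T β = (c * l₁) • u + T w := by rw [hβ, map_add, map_smul, hTv, smul_smul]
  have hcl : c * l₁ ≠ 0 := mul_ne_zero hβv hl₁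
  calc Real.sin (angle (T β) u) ^ 2
      = ‖T w‖ ^ 2 / ((c * l₁) ^ 2 + ‖T w‖ ^ 2) := by
        rw [hTβ, sin_sq_angle_smul_add_of_inner_eq_zero hu hTwu hcl]
    _ ≤ ‖T w‖ ^ 2 / (c * l₁) ^ 2 := by
        gcongr
        exact le_add_of_nonneg_right (sq_nonneg _)
    _ ≤ l₂ ^ 2 * ‖w‖ ^ 2 / (c * l₁) ^ 2 := by gcongr
    _ = ‖w‖ ^ 2 / c ^ 2 * (l₂ / l₁) ^ 2 := by field_simp
    _ = Real.tan (angle β v) ^ 2 * (l₂ / l₁) ^ 2 := by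
        rw [hβ, tan_sq_angle_smul_add_of_inner_eq_zero hv hwv hβv]

end InnerProductGeometry

lemma sum_mul_eq_inner {ι : Type*} [Fintype ι] (x y : ι → ℝ) :
    ∑ i, x i * y i = ⟪WithLp.toLp 2 x, WithLp.toLp 2 y⟫ := by
  simp [EuclideanSpace.inner_toLp_toLp, dotProduct, mul_comm]

lemma sum_sq_eq_norm_sq {ι : Type*} [Fintype ι] (x : ι → ℝ) :
    ∑ i, x i ^ 2 = ‖WithLp.toLp 2 x‖ ^ 2 :=
  (EuclideanSpace.real_norm_sq_eq _).symm

theorem power_method_one_step_general (p₁ p₂ : ℕ) (A : Matrix (Fin p₁) (Fin p₂) ℝ)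
    (l₁ l₂ : ℝ) (hl : l₂ < l₁) (hl2 : 0 ≤ l₂)
    (u : Fin p₁ → ℝ) (v : Fin p₂ → ℝ)
    (hu : ∑ i, u i ^ 2 = 1) (hv : ∑ i, v i ^ 2 = 1)
    (hAv : A.mulVec v = l₁ • u)
    (hAperp : ∀ x : Fin p₂ → ℝ, (∑ i, x i * v i) = 0 →
      (∑ i, (A.mulVec x) i * u i) = 0 ∧ (∑ i, (A.mulVec x) i ^ 2) ≤ l₂ ^ 2 * ∑ i, x i ^ 2)
    (β : Fin p₂ → ℝ)
    (hβv : (∑ i, β i * v i) ≠ 0) :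
    1 - (∑ i, (A.mulVec β) i * u i) ^ 2 / ((∑ i, (A.mulVec β) i ^ 2) * ∑ i, u i ^ 2)
      ≤ ((1 - (∑ i, β i * v i) ^ 2 / ((∑ i, β i ^ 2) * ∑ i, v i ^ 2)) /
          ((∑ i, β i * v i) ^ 2 / ((∑ i, β i ^ 2) * ∑ i, v i ^ 2))) * (l₂ / l₁) ^ 2 := by
  have hT : ∀ x, WithLp.toLp 2 (A *ᵥ x) = toEuclideanLin A (WithLp.toLp 2 x) := fun _ => rfl
  simp only [sum_mul_eq_inner, sum_sq_eq_norm_sq, hT] at hu hv hAperp hβv ⊢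
  rw [← sin_sq_angle, ← sin_sq_angle, ← cos_sq_angle, ← div_pow, ← Real.tan_eq_sin_div_cos]
  refine sin_sq_angle_apply_le_tan_sq_mul (hl2.trans_lt hl).ne' ?_ ?_ ?_ (fun x hx => ?_) hβv
  · exact (pow_eq_one_iff_of_nonneg (norm_nonneg _) two_ne_zero).mp hu
  · exact (pow_eq_one_iff_of_nonneg (norm_nonneg _) two_ne_zero).mp hv
  · rw [← hT, hAv, WithLp.toLp_smul]
  · exact hAperp x.ofLp hx

/-- One-step contraction of the power method for singular vectors: if `(u, v)` is the first
pair of singular vectors of `A` with singular values `l₁ > l₂ ≥ 0` (so that `A v = l₁ u`,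
and on the orthogonal complement of `v` the image of `A` is orthogonal to `u` and contracted
by `l₂`), then for a unit vector `β` with `ᾱ = Aβ ≠ 0`,
`sin²∠(ᾱ, u) ≤ (sin²∠(β,v)/cos²∠(β,v)) (l₂/l₁)²`. -/
theorem power_method_one_step (p₁ p₂ : ℕ) (A : Matrix (Fin p₁) (Fin p₂) ℝ)
    (l₁ l₂ : ℝ) (hl : l₂ < l₁) (hl2 : 0 ≤ l₂)
    (u : Fin p₁ → ℝ) (v : Fin p₂ → ℝ)
    (hu : ∑ i, u i ^ 2 = 1) (hv : ∑ i, v i ^ 2 = 1)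
    (hAv : A.mulVec v = l₁ • u)
    (hAperp : ∀ x : Fin p₂ → ℝ, (∑ i, x i * v i) = 0 →
      (∑ i, (A.mulVec x) i * u i) = 0 ∧ (∑ i, (A.mulVec x) i ^ 2) ≤ l₂ ^ 2 * ∑ i, x i ^ 2)
    (β : Fin p₂ → ℝ) (hβ : ∑ i, β i ^ 2 = 1)
    (hβv : (∑ i, β i * v i) ≠ 0)
    (hα : A.mulVec β ≠ 0) :
    1 - (∑ i, (A.mulVec β) i * u i) ^ 2 / ((∑ i, (A.mulVec β) i ^ 2) * ∑ i, u i ^ 2)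
      ≤ ((1 - (∑ i, β i * v i) ^ 2 / ((∑ i, β i ^ 2) * ∑ i, v i ^ 2)) /
          ((∑ i, β i * v i) ^ 2 / ((∑ i, β i ^ 2) * ∑ i, v i ^ 2))) * (l₂ / l₁) ^ 2 :=
  power_method_one_step_general p₁ p₂ A l₁ l₂ hl hl2 u v hu hv hAv hAperp β hβv
end

section
/- For i = 1, 2, let θ_i ∈ ℝ^{p₁} and η_i ∈ ℝ^{p₂} be unit vectors, 0 < λ < 1, and let P_i be the distribution of n i.i.d. observations from N(0, Σ_i) with Σ_i = [[I_{p₁}, λθ_iη_i^T], [λη_iθ_i^T, I_{p₂}]]. Then the Kullback–Leibler divergence satisfies K(P₁, P₂) ≤ (nλ²/(2(1−λ²)))(‖θ₁ − θ₂‖² + ‖η₁ − η₂‖²). -/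
/-!
The inverse of `Σ₂` has an explicit closed form, and `det Σ₁ = det Σ₂ = 1 - λ²` by the matrix
determinant lemma, so the log-determinant term vanishes and, with `s = ⟨θ₂, θ₁⟩`, `t = ⟨η₂, η₁⟩`,
`tr (Σ₂⁻¹ Σ₁) - p = 2λ²/(1 - λ²) · (1 - s t)`. For unit vectors `‖θ₁ - θ₂‖² = 2 (1 - s)` (so
`s ≤ 1`), likewise for `t`, and `1 - s t ≤ (1 - s) + (1 - t)` because `(1 - s)(1 - t) ≥ 0`.
-/

open Finset Matrix

namespace Matrix

variable {α 𝕜 m n : Type*} [Fintype m] [Fintype n]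

theorem trace_fromBlocks [AddCommMonoid α] (A : Matrix m m α) (B : Matrix m n α)
    (C : Matrix n m α) (D : Matrix n n α) :
    (fromBlocks A B C D).trace = A.trace + D.trace :=
  Fintype.sum_sum_type _

variable [DecidableEq m] [DecidableEq n]

theorem det_one_sub_smul_vecMulVec [CommRing α] (c : α) (u v : m → α) :
    (1 - c • vecMulVec u v).det = 1 - c * (v ⬝ᵥ u) := by
  rw [sub_eq_add_neg, ← neg_smul, ← smul_vecMulVec, vecMulVec_eq Unit,
    det_one_add_replicateCol_mul_replicateRow, dotProduct_smul, smul_eq_mul]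
  ring

variable [Field 𝕜]

def ccaCov (lam : 𝕜) (θ : m → 𝕜) (η : n → 𝕜) : Matrix (m ⊕ n) (m ⊕ n) 𝕜 :=
  fromBlocks 1 (lam • vecMulVec θ η) (lam • vecMulVec η θ) 1

theorem det_ccaCov (lam : 𝕜) (θ : m → 𝕜) (η : n → 𝕜) :
    (ccaCov lam θ η).det = 1 - lam ^ 2 * (θ ⬝ᵥ θ) * (η ⬝ᵥ η) := by
  have hschur : (lam • vecMulVec η θ) * (lam • vecMulVec θ η)
      = (lam ^ 2 * (θ ⬝ᵥ θ)) • vecMulVec η η := by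
    rw [Matrix.smul_mul, Matrix.mul_smul, vecMulVec_mul_vecMulVec, vecMulVec_smul, smul_smul,
      smul_smul, sq]
  rw [ccaCov, det_fromBlocks_one₁₁, hschur, det_one_sub_smul_vecMulVec, mul_assoc]

theorem inv_ccaCov {lam : 𝕜} (hlam : lam ^ 2 ≠ 1) {θ : m → 𝕜} {η : n → 𝕜}
    (hθ : θ ⬝ᵥ θ = 1) (hη : η ⬝ᵥ η = 1) :
    (ccaCov lam θ η)⁻¹ =
      fromBlocks (1 + (lam ^ 2 / (1 - lam ^ 2)) • vecMulVec θ θ)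
        ((-(lam / (1 - lam ^ 2))) • vecMulVec θ η)
        ((-(lam / (1 - lam ^ 2))) • vecMulVec η θ)
        (1 + (lam ^ 2 / (1 - lam ^ 2)) • vecMulVec η η) := by
  refine inv_eq_right_inv ?_
  rw [ccaCov, fromBlocks_multiply, ← fromBlocks_one, fromBlocks_inj]
  refine ⟨?_, ?_, ?_, ?_⟩ <;>
    simp only [Matrix.one_mul, Matrix.mul_one, Matrix.smul_mul, Matrix.mul_smul,
      Matrix.mul_add, vecMulVec_mul_vecMulVec, hθ, hη, one_smul, smul_smul] <;>
    match_scalars <;> field_simp <;> ring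

theorem trace_inv_ccaCov_mul {lam : 𝕜} (hlam : lam ^ 2 ≠ 1) {θ₁ θ₂ : m → 𝕜} {η₁ η₂ : n → 𝕜}
    (hθ₂ : θ₂ ⬝ᵥ θ₂ = 1) (hη₂ : η₂ ⬝ᵥ η₂ = 1) :
    ((ccaCov lam θ₂ η₂)⁻¹ * ccaCov lam θ₁ η₁).trace =
      Fintype.card m + Fintype.card n +
        2 * (lam ^ 2 / (1 - lam ^ 2)) * (1 - (θ₂ ⬝ᵥ θ₁) * (η₂ ⬝ᵥ η₁)) := by
  rw [inv_ccaCov hlam hθ₂ hη₂, ccaCov, fromBlocks_multiply, trace_fromBlocks]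
  simp only [Matrix.mul_one, Matrix.smul_mul, Matrix.mul_smul, smul_smul,
    vecMulVec_mul_vecMulVec, trace_add, trace_smul, trace_one, trace_vecMulVec,
    vecMulVec_smul, smul_eq_mul, hθ₂, hη₂]
  field_simp
  ring

theorem det_inv_ccaCov_mul {lam : 𝕜} (hlam : lam ^ 2 ≠ 1) {θ₁ θ₂ : m → 𝕜} {η₁ η₂ : n → 𝕜}
    (hθ₁ : θ₁ ⬝ᵥ θ₁ = 1) (hθ₂ : θ₂ ⬝ᵥ θ₂ = 1) (hη₁ : η₁ ⬝ᵥ η₁ = 1) (hη₂ : η₂ ⬝ᵥ η₂ = 1) :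
    ((ccaCov lam θ₂ η₂)⁻¹ * ccaCov lam θ₁ η₁).det = 1 := by
  rw [det_mul, det_nonsing_inv, det_ccaCov, det_ccaCov, hθ₁, hθ₂, hη₁, hη₂, mul_one, mul_one,
    Ring.inverse_eq_inv, inv_mul_cancel₀ (sub_ne_zero.mpr hlam.symm)]

end Matrix

section UnitVectors

variable {ι κ : Type*} [Fintype ι] [Fintype κ]

theorem dotProduct_self_eq_sum_sq {R : Type*} [CommSemiring R] (x : ι → R) :
    x ⬝ᵥ x = ∑ i, x i ^ 2 := by
  simp only [dotProduct, sq]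

theorem sum_sub_sq_eq_dotProduct {R : Type*} [CommRing R] (x y : ι → R) :
    ∑ i, (x i - y i) ^ 2 = x ⬝ᵥ x + y ⬝ᵥ y - 2 * (y ⬝ᵥ x) := by
  simp only [dotProduct, mul_sum, ← sum_add_distrib, ← sum_sub_distrib]
  exact sum_congr rfl fun i _ => by ring

theorem dotProduct_le_one_of_unit {x y : ι → ℝ} (hx : x ⬝ᵥ x = 1) (hy : y ⬝ᵥ y = 1) :
    y ⬝ᵥ x ≤ 1 := by
  have h := sum_sub_sq_eq_dotProduct x y
  rw [hx, hy] at h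
  nlinarith [sum_nonneg fun i (_ : i ∈ univ) => sq_nonneg (x i - y i)]

theorem two_mul_one_sub_dotProduct_mul_dotProduct_le {x₁ x₂ : ι → ℝ} {y₁ y₂ : κ → ℝ}
    (hx₁ : x₁ ⬝ᵥ x₁ = 1) (hx₂ : x₂ ⬝ᵥ x₂ = 1) (hy₁ : y₁ ⬝ᵥ y₁ = 1) (hy₂ : y₂ ⬝ᵥ y₂ = 1) :
    2 * (1 - (x₂ ⬝ᵥ x₁) * (y₂ ⬝ᵥ y₁)) ≤
      ∑ i, (x₁ i - x₂ i) ^ 2 + ∑ i, (y₁ i - y₂ i) ^ 2 := by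
  have hs := dotProduct_le_one_of_unit hx₁ hx₂
  have ht := dotProduct_le_one_of_unit hy₁ hy₂
  rw [sum_sub_sq_eq_dotProduct, sum_sub_sq_eq_dotProduct, hx₁, hx₂, hy₁, hy₂]
  nlinarith [mul_nonneg (sub_nonneg.mpr hs) (sub_nonneg.mpr ht)]

end UnitVectors

/-- KL divergence bound between the two Gaussian models of the minimax lower bound: with
`Σ_i = [[I, λθ_iη_iᵀ],[λη_iθ_iᵀ, I]]` and `P_i` the law of `n` i.i.d. draws of `N(0, Σ_i)`,
using the Gaussian formula `K(P₁,P₂) = (n/2)[tr(Σ₂⁻¹Σ₁) - p - log det(Σ₂⁻¹Σ₁)]`, we have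
`K(P₁,P₂) ≤ (nλ²/(2(1-λ²)))(‖θ₁-θ₂‖² + ‖η₁-η₂‖²)`. -/
theorem kl_bound_gaussian_pair (p₁ p₂ n : ℕ)
    (θ₁ θ₂ : Fin p₁ → ℝ) (η₁ η₂ : Fin p₂ → ℝ)
    (hθ₁ : ∑ i, θ₁ i ^ 2 = 1) (hθ₂ : ∑ i, θ₂ i ^ 2 = 1)
    (hη₁ : ∑ i, η₁ i ^ 2 = 1) (hη₂ : ∑ i, η₂ i ^ 2 = 1)
    (lam : ℝ) (hlam0 : 0 < lam) (hlam1 : lam < 1) :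
    (n : ℝ) / 2 *
        (((Matrix.fromBlocks 1 (lam • Matrix.vecMulVec θ₂ η₂)
              (lam • Matrix.vecMulVec η₂ θ₂) (1 : Matrix (Fin p₂) (Fin p₂) ℝ))⁻¹ *
            Matrix.fromBlocks 1 (lam • Matrix.vecMulVec θ₁ η₁)
              (lam • Matrix.vecMulVec η₁ θ₁) 1).trace
          - (p₁ + p₂ : ℝ)
          - Real.log ((Matrix.fromBlocks 1 (lam • Matrix.vecMulVec θ₂ η₂)
              (lam • Matrix.vecMulVec η₂ θ₂) (1 : Matrix (Fin p₂) (Fin p₂) ℝ))⁻¹ *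
            Matrix.fromBlocks 1 (lam • Matrix.vecMulVec θ₁ η₁)
              (lam • Matrix.vecMulVec η₁ θ₁) 1).det)
      ≤ (n : ℝ) * lam ^ 2 / (2 * (1 - lam ^ 2)) *
          ((∑ i, (θ₁ i - θ₂ i) ^ 2) + ∑ i, (η₁ i - η₂ i) ^ 2) := by
  simp only [← dotProduct_self_eq_sum_sq] at hθ₁ hθ₂ hη₁ hη₂
  have hlam_sq : lam ^ 2 < 1 := by nlinarith
  have hden : 0 < 1 - lam ^ 2 := sub_pos.mpr hlam_sq
  have hcoef : 0 ≤ (n : ℝ) * lam ^ 2 / (2 * (1 - lam ^ 2)) :=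
    div_nonneg (by positivity) (by positivity)
  change (n : ℝ) / 2 * (((ccaCov lam θ₂ η₂)⁻¹ * ccaCov lam θ₁ η₁).trace - (p₁ + p₂ : ℝ)
    - Real.log ((ccaCov lam θ₂ η₂)⁻¹ * ccaCov lam θ₁ η₁).det) ≤ _
  rw [trace_inv_ccaCov_mul hlam_sq.ne hθ₂ hη₂, det_inv_ccaCov_mul hlam_sq.ne hθ₁ hθ₂ hη₁ hη₂,
    Real.log_one, Fintype.card_fin, Fintype.card_fin]
  calc _ = (n : ℝ) * lam ^ 2 / (2 * (1 - lam ^ 2)) * (2 * (1 - (θ₂ ⬝ᵥ θ₁) * (η₂ ⬝ᵥ η₁))) := by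
        field_simp
        ring
    _ ≤ _ := mul_le_mul_of_nonneg_left
        (two_mul_one_sub_dotProduct_mul_dotProduct_le hθ₁ hθ₂ hη₁ hη₂) hcoef
end
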